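/- Let d ≥ 3 be odd, let k ≥ 4, let n = (d−1)/2, and let G be a nonempty connected simple graph. Let G' be the disjoint union of G and Q_n together with an edge between the vertex c_0 of Q_n and every vertex of G. Then G' has diameter exactly d, and G admits a proper vertex (k−1)-coloring if and only if G' admits a strong conflict-free vertex-connection k-coloring. -/

import Mathlib

/-!
Give the vertices of `G'` heights: `0` on `G`, `2j+1` at `c_j`, `2i+2` at `a_{i+1}` and
`b_{i+1}`. Along an edge the height changes by at most one, while from any vertex a path climbs
one height per step up to `c_n` (a "ladder", free to pass `a_i` or `b_i` in each diamond). So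
vertices of different heights are at distance the difference of their heights, and the diameter
`2n+1 = d` is attained between `G` and `c_n`.

Given a proper `(k-1)`-coloring of `G`, give `c_0` the remaining color `st` and color the `c_j`
(`j ≥ 1`), `a_i`, `b_i` with three colors `c`, `a`, `b` other than `st`. A geodesic through `c_0`
sees `st` once. Any other geodesic is a ladder segment alternating between `c` and diamond
vertices, whose interior diamond vertices can be chosen so that some color appears exactly once.
Conversely a strong conflict-free coloring is proper (the only geodesic between adjacent vertices
is the edge), so on `G` it avoids the color of `c_0`.
-/

open SimpleGraph

/-- `f` is a strong conflict-free vertex-connection coloring of `G`: any two distinct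
vertices are joined by a shortest path on which some color occurs exactly once. -/
def IsSCFVC {V α : Type*} [DecidableEq α] (G : SimpleGraph V) (f : V → α) : Prop :=
  ∀ u v : V, u ≠ v → ∃ p : G.Walk u v, p.length = G.dist u v ∧
    ∃ c : α, (p.support.map f).count c = 1

/-- Vertices of the graph `Q n`: `A i`, `B i` are `a_{i+1}`, `b_{i+1}` for `i : Fin n`,
and `C j` is `c_j` for `j : Fin (n+1)`. -/
inductive QV (n : ℕ) where
  | A : Fin n → QV n
  | B : Fin n → QV n
  | C : Fin (n + 1) → QV n
deriving DecidableEq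

/-- The disjoint union of `G` and `Q n` together with an edge between the vertex `c_0`
of `Q n` and every vertex of `G`. -/
def joinQ {V : Type*} (G : SimpleGraph V) (n : ℕ) : SimpleGraph (V ⊕ QV n) :=
  SimpleGraph.fromRel (fun x y =>
    match x, y with
    | .inl u, .inl v => G.Adj u v
    | .inr (.A i), .inr (.B j) => i.val = j.val
    | .inr (.A i), .inr (.C j) => j.val = i.val ∨ j.val = i.val + 1
    | .inr (.B i), .inr (.C j) => j.val = i.val ∨ j.val = i.val + 1
    | .inl _, .inr (.C j) => j.val = 0
    | _, _ => False)

theorem SimpleGraph.exists_walk_support_eq_map_range' {V : Type*} {G : SimpleGraph V}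
    (g : ℕ → V) {a b : ℕ} (hab : a ≤ b) (h : ∀ t, a ≤ t → t < b → G.Adj (g t) (g (t + 1))) :
    ∃ p : G.Walk (g a) (g b), p.support = (List.range' a (b - a + 1)).map g := by
  induction b, hab using Nat.le_induction with
  | base => exact ⟨Walk.nil, by simp⟩
  | succ b hab ih =>
    obtain ⟨p, hp⟩ := ih fun t h₁ h₂ => h t h₁ (by omega)
    refine ⟨p.concat (h b hab (by omega)), ?_⟩
    rw [Walk.support_concat, hp, show b + 1 - a + 1 = b - a + 1 + 1 by omega,
      List.range'_concat (n := b - a + 1), show a + 1 * (b - a + 1) = b + 1 by omega]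
    simp

theorem SimpleGraph.Adj.exists_geodesic_count_eq_one {V α : Type*} [DecidableEq α]
    {G : SimpleGraph V} {f : V → α} {x y : V} (h : G.Adj x y) (hf : f x ≠ f y) :
    ∃ p : G.Walk x y, p.length = G.dist x y ∧ ∃ c, (p.support.map f).count c = 1 :=
  ⟨h.toWalk, by simp [dist_eq_one_iff_adj.mpr h], f x, by simp [hf.symm]⟩

theorem IsSCFVC.ne_of_adj {V α : Type*} [DecidableEq α] {G : SimpleGraph V} {f : V → α}
    (hf : IsSCFVC G f) {x y : V} (h : G.Adj x y) : f x ≠ f y := by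
  obtain ⟨p, hp, c, hc⟩ := hf x y h.ne
  rw [dist_eq_one_iff_adj.mpr h] at hp
  rcases p with _ | ⟨_, _ | ⟨_, _⟩⟩
  · simp at hp
  · intro hxy
    by_cases hc' : f y = c <;> simp_all
  · simp at hp

theorem List.count_map_range'_eq_one {α : Type*} [DecidableEq α] {f : ℕ → α} {a m t₀ : ℕ}
    (h₀ : a ≤ t₀) (h₁ : t₀ < a + m) (h : ∀ t, a ≤ t → t < a + m → t ≠ t₀ → f t ≠ f t₀) :
    ((List.range' a m).map f).count (f t₀) = 1 := by
  obtain ⟨k, rfl⟩ : ∃ k, m = (t₀ - a) + (k + 1) := ⟨a + m - t₀ - 1, by omega⟩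
  rw [← List.range'_append, show a + 1 * (t₀ - a) = t₀ by omega, List.range'_succ,
    List.map_append, List.map_cons, List.count_append, List.count_cons_self,
    List.count_eq_zero.mpr, List.count_eq_zero.mpr]
  all_goals simp only [List.mem_map, List.mem_range', not_exists, not_and]
  all_goals rintro t ⟨i, hi, rfl⟩; exact h _ (by omega) (by omega) (by omega)

namespace JoinQ

open Sum QV

section Stripe

variable {α : Type*} (a b c : α)

/-- Colors along a ladder: `c` at the odd heights (the `c_j`), and `b` or `a` at an even
height `t` as `w t` chooses `B` or `A` there. -/
def stripe (w : ℕ → Bool) (t : ℕ) : α := if t % 2 = 1 then c else cond (w t) b a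

variable {a b c}

theorem stripe_ne (hab : a ≠ b) (hac : a ≠ c) (hbc : b ≠ c) {w : ℕ → Bool} {t t' : ℕ}
    (h : t % 2 ≠ t' % 2 ∨ t % 2 = 0 ∧ t' % 2 = 0 ∧ w t ≠ w t') :
    stripe a b c w t ≠ stripe a b c w t' := by
  unfold stripe
  rcases h with h | ⟨h, h', hw⟩
  · rcases Nat.mod_two_eq_zero_or_one t with ht | ht
    · rw [if_neg (by omega), if_pos (by omega)]
      cases w t <;> assumption
    · rw [if_pos ht, if_neg (by omega)]
      cases w t' <;> simp [hac.symm, hbc.symm]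
  · rw [if_neg (by omega), if_neg (by omega)]
    revert hw
    cases w t <;> cases w t' <;> simp [hab, hab.symm]

theorem exists_unique_stripe (hab : a ≠ b) (hac : a ≠ c) (hbc : b ≠ c) (w : ℕ → Bool) {p q : ℕ}
    (hpq : p < q) : ∃ w' : ℕ → Bool, w' p = w p ∧ w' q = w q ∧ ∃ t₀, p ≤ t₀ ∧ t₀ ≤ q ∧
      ∀ t, p ≤ t → t ≤ q → t ≠ t₀ → stripe a b c w' t ≠ stripe a b c w' t₀ := by
  by_cases hshort : q ≤ p + 2
  · -- within at most three consecutive heights, some height is alone with its parity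
    refine ⟨w, rfl, rfl, if q = p + 1 then p else p + 1, by split_ifs <;> omega,
      by split_ifs <;> omega, fun t _ _ ht => stripe_ne hab hac hbc (Or.inl ?_)⟩
    split_ifs at ht ⊢ <;> omega
  by_cases hends : p % 2 = 0 ∧ q % 2 = 0 ∧ w p ≠ w q
  · -- choose as at `q` everywhere else, leaving `p` alone with its color
    refine ⟨fun t => if t = p then w p else w q, by simp, by simp [hpq.ne'], p, le_rfl, hpq.le,
      fun t _ _ ht => stripe_ne hab hac hbc ?_⟩
    by_cases htp : t % 2 = p % 2
    · exact Or.inr ⟨by omega, by omega, by simp [ht, hends.2.2.symm]⟩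
    · exact Or.inl htp
  · -- an even height strictly between `p` and `q`, colored differently from every other height
    obtain ⟨e, he⟩ : ∃ e, e = p + 2 - p % 2 := ⟨_, rfl⟩
    let x := if p % 2 = 0 then !w p else !w q
    refine ⟨fun t => if t = p then w p else if t = q then w q else if t = e then x else !x,
      by simp, by simp [hpq.ne'], e, by omega, by omega, fun t _ _ ht => stripe_ne hab hac hbc ?_⟩
    by_cases htp : t % 2 = e % 2
    · refine Or.inr ⟨by omega, by omega, ?_⟩
      have hep : e ≠ p := by omega
      have heq : e ≠ q := by omega
      simp only [ht, hep, heq, if_true, if_false]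
      split_ifs with htp' htq
      · subst htp'
        simp [x, show t % 2 = 0 by omega]
      · subst htq
        by_cases hp : p % 2 = 0
        · have hwpq : w p = w t := by_contra fun h => hends ⟨hp, by omega, h⟩
          simp [x, hp, hwpq]
        · simp [x, hp]
      · simp
    · exact Or.inl htp

end Stripe

variable {V : Type*} {G : SimpleGraph V} {n : ℕ}

def height : V ⊕ QV n → ℕ
  | inl _ => 0
  | inr (C j) => 2 * j + 1
  | inr (A i) => 2 * i + 2
  | inr (B i) => 2 * i + 2

theorem height_le_of_adj {x y : V ⊕ QV n} (h : (joinQ G n).Adj x y) :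
    height y ≤ height x + 1 := by
  rw [joinQ, fromRel_adj] at h
  obtain ⟨-, h | h⟩ := h <;>
  · rcases x with u | (i | i | j) <;> rcases y with v | (i' | i' | j') <;>
      simp_all [height] <;> omega

theorem height_le_add_length {x y : V ⊕ QV n} (p : (joinQ G n).Walk x y) :
    height y ≤ height x + p.length := by
  induction p with
  | nil => simp
  | cons h _ ih => have := height_le_of_adj h; rw [Walk.length_cons]; omega

theorem sub_height_le_dist (x y : V ⊕ QV n) (h : (joinQ G n).Reachable x y) :
    height y - height x ≤ (joinQ G n).dist x y := by
  obtain ⟨p, hp⟩ := h.exists_walk_length_eq_dist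
  have := height_le_add_length p
  omega

/-- The vertex at height `t` on the geodesic from `u` to `c_n` that, at the even height `2i+2`,
passes `B i` if `w (2i+2)` and `A i` otherwise. Heights beyond `2n+1` are clamped to `c_n`. -/
def ladder (u : V) (w : ℕ → Bool) : ℕ → V ⊕ QV n
  | 0 => inl u
  | t + 1 =>
    if h : t % 2 = 1 ∧ t / 2 < n then
      inr (if w (t + 1) then B ⟨t / 2, h.2⟩ else A ⟨t / 2, h.2⟩)
    else inr (C ⟨min (t / 2) n, by omega⟩)

theorem height_ladder (u : V) (w : ℕ → Bool) {t : ℕ} (ht : t ≤ 2 * n + 1) :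
    height (ladder (n := n) u w t) = t := by
  rcases t with _ | t
  · rfl
  · simp only [ladder]
    split_ifs <;> simp [height] <;> omega

theorem ladder_adj (u : V) (w : ℕ → Bool) {t : ℕ} (ht : t < 2 * n + 1) :
    (joinQ G n).Adj (ladder u w t) (ladder u w (t + 1)) := by
  rw [joinQ, fromRel_adj]
  rcases t with _ | t
  · simp [ladder]
  · simp only [ladder]
    split_ifs <;> simp <;> omega

theorem ladder_congr (u : V) {w w' : ℕ → Bool} {t : ℕ} (h : w t = w' t) :
    ladder (n := n) u w t = ladder u w' t := by
  rcases t with _ | t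
  · rfl
  · simp only [ladder, h]

theorem exists_ladder_walk (u : V) (w : ℕ → Bool) {a b : ℕ} (hab : a ≤ b)
    (hb : b ≤ 2 * n + 1) :
    ∃ p : (joinQ G n).Walk (ladder u w a) (ladder u w b),
      p.length = b - a ∧ p.support = (List.range' a (b - a + 1)).map (ladder u w) := by
  obtain ⟨p, hp⟩ := exists_walk_support_eq_map_range' (G := joinQ G n) (ladder u w) hab
    fun t _ ht => ladder_adj u w (by omega)
  refine ⟨p, ?_, hp⟩
  simpa [hp] using p.length_support.symm

theorem dist_ladder (u : V) (w : ℕ → Bool) {a b : ℕ} (hab : a ≤ b) (hb : b ≤ 2 * n + 1) :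
    (joinQ G n).dist (ladder u w a) (ladder u w b) = b - a := by
  obtain ⟨p, hp, -⟩ := exists_ladder_walk (G := G) u w hab hb
  refine le_antisymm (hp ▸ dist_le p) ?_
  simpa only [height_ladder u w hb, height_ladder u w (hab.trans hb)] using
    sub_height_le_dist _ _ p.reachable

def isB : V ⊕ QV n → Bool
  | inr (B _) => true
  | _ => false

theorem height_le (x : V ⊕ QV n) : height x ≤ 2 * n + 1 := by
  rcases x with _ | (⟨i, hi⟩ | ⟨i, hi⟩ | ⟨j, hj⟩) <;> simp [height] <;> omega

theorem ladder_height (x : V ⊕ QV n) (u : V) (w : ℕ → Bool) (hw : w (height x) = isB x)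
    (hu : ∀ v, x = inl v → u = v) : ladder u w (height x) = x := by
  rcases x with v | (⟨i, hi⟩ | ⟨i, hi⟩ | ⟨j, hj⟩)
  · simp [ladder, height, hu v rfl]
  · have : (2 * i + 1) / 2 = i := by omega
    simp_all [ladder, height, isB]
  · have : (2 * i + 1) / 2 = i := by omega
    simp_all [ladder, height, isB]
  · simp_all [ladder, height, isB]
    omega

theorem exists_ladder_eq [Nonempty V] {x y : V ⊕ QV n} (hxy : height x < height y) :
    ∃ u w, ladder u w (height x) = x ∧ ladder (n := n) u w (height y) = y := by
  let u : V := Sum.elim id (fun _ => Classical.arbitrary V) x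
  refine ⟨u, fun t => if t = height x then isB x else isB y,
    ladder_height x u _ (by simp) fun v hv => by simp [u, hv], ladder_height y u _
      (by simp [hxy.ne']) fun v hv => ?_⟩
  subst hv
  simp [height] at hxy

theorem adj_of_height_eq {x y : V ⊕ QV n} (hne : x ≠ y) (h : height x = height y)
    (hx : height x ≠ 0) : (joinQ G n).Adj x y := by
  rw [joinQ, fromRel_adj]
  refine ⟨hne, ?_⟩
  rcases x with u | (⟨i, _⟩ | ⟨i, _⟩ | ⟨j, _⟩) <;>
    rcases y with v | (⟨i', _⟩ | ⟨i', _⟩ | ⟨j', _⟩) <;>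
    simp only [height] at h hx <;> simp_all <;> omega

theorem adj_inl_C_zero (u : V) : (joinQ G n).Adj (inl u) (inr (C 0)) := by
  simp [joinQ]

theorem adj_inl_inl {u v : V} (h : G.Adj u v) : (joinQ G n).Adj (inl u) (inl v) := by
  simp [joinQ, h.ne, h]

theorem edist_eq_of_height_lt [Nonempty V] {x y : V ⊕ QV n} (h : height x < height y) :
    (joinQ G n).edist x y = (height y - height x : ℕ) := by
  obtain ⟨u, w, hx, hy⟩ := exists_ladder_eq h
  obtain ⟨p, -⟩ := exists_ladder_walk (G := G) u w h.le (height_le y)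
  conv_lhs => rw [← hx, ← hy]
  rw [← p.reachable.coe_dist_eq_edist, dist_ladder u w h.le (height_le y)]

theorem ediam_joinQ [Nonempty V] (hn : 1 ≤ n) : (joinQ G n).ediam = (2 * n + 1 : ℕ) := by
  refine le_antisymm (ediam_le_of_edist_le fun x y => ?_) ?_
  · rcases lt_trichotomy (height x) (height y) with h | h | h
    · rw [edist_eq_of_height_lt h]
      exact_mod_cast (height_le y).trans' (Nat.sub_le _ _)
    · obtain rfl | hne := eq_or_ne x y
      · simp
      rcases x with u | q
      · rcases y with v | q'
        · calc (joinQ G n).edist (inl u) (inl v)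
              ≤ (Walk.cons (adj_inl_C_zero u) (Walk.cons (adj_inl_C_zero v).symm .nil)).length :=
                edist_le _
            _ ≤ (2 * n + 1 : ℕ) := by
                simp only [Walk.length_cons, Walk.length_nil]; norm_cast; omega
        · cases q' <;> simp [height] at h
      · rw [edist_eq_one_iff_adj.mpr (adj_of_height_eq hne h (by cases q <;> simp [height]))]
        exact_mod_cast (by omega : 1 ≤ 2 * n + 1)
    · rw [SimpleGraph.edist_comm, edist_eq_of_height_lt h]
      exact_mod_cast (height_le x).trans' (Nat.sub_le _ _)
  · let u := Classical.arbitrary V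
    calc ((2 * n + 1 : ℕ) : ℕ∞) = (joinQ G n).edist (inl u) (inr (C (Fin.last n))) := by
          rw [edist_eq_of_height_lt] <;> simp [height]
      _ ≤ _ := edist_le_ediam

theorem diam_joinQ [Nonempty V] (hn : 1 ≤ n) : (joinQ G n).diam = 2 * n + 1 := by
  rw [diam, ediam_joinQ hn, ENat.toNat_natCast]

section Coloring

variable {α : Type*}

def joinColoring (g : V → α) (st a b c : α) : V ⊕ QV n → α
  | inl u => g u
  | inr (C j) => if (j : ℕ) = 0 then st else c
  | inr (A _) => a
  | inr (B _) => b

variable {g : V → α} {st a b c : α}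

theorem joinColoring_ladder (u : V) (w : ℕ → Bool) {t : ℕ} (ht : t ≤ 2 * n + 1) :
    joinColoring (n := n) g st a b c (ladder u w t) =
      if t = 0 then g u else if t = 1 then st else stripe a b c w t := by
  rcases t with _ | t
  · rfl
  · simp only [ladder, stripe]
    split_ifs <;> simp_all [joinColoring] <;> omega

theorem joinColoring_ne_of_adj (hg : ∀ u v, G.Adj u v → g u ≠ g v) (hgs : ∀ u, g u ≠ st)
    (hab : a ≠ b) (hac : a ≠ c) (hbc : b ≠ c) (has : a ≠ st) (hbs : b ≠ st)
    {x y : V ⊕ QV n} (h : (joinQ G n).Adj x y) :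
    joinColoring g st a b c x ≠ joinColoring g st a b c y := by
  rw [joinQ, fromRel_adj] at h
  obtain ⟨-, h | h⟩ := h <;>
  · rcases x with u | (i | i | j) <;> rcases y with v | (i' | i' | j') <;>
      simp_all [joinColoring] <;>
      first
        | exact Ne.symm (hg _ _ h)
        | exact Ne.symm (hgs _)
        | exact Ne.symm hab
        | split_ifs <;> simp_all [Ne.symm]

variable [DecidableEq α]

theorem exists_geodesic_count_eq_one_of_height_lt [Nonempty V] (hgs : ∀ u, g u ≠ st)
    (hab : a ≠ b) (hac : a ≠ c) (hbc : b ≠ c) (has : a ≠ st) (hbs : b ≠ st) (hcs : c ≠ st)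
    {x y : V ⊕ QV n} (hxy : height x < height y) :
    ∃ p : (joinQ G n).Walk x y, p.length = (joinQ G n).dist x y ∧
      ∃ c', (p.support.map (joinColoring g st a b c)).count c' = 1 := by
  obtain ⟨u, w, hx, hy⟩ := exists_ladder_eq hxy
  have hy2 := height_le y
  obtain ⟨w', hwx, hwy, t₀, ht₀x, ht₀y, huniq⟩ : ∃ w' : ℕ → Bool,
      w' (height x) = w (height x) ∧ w' (height y) = w (height y) ∧ ∃ t₀, height x ≤ t₀ ∧
        t₀ ≤ height y ∧ ∀ t, height x ≤ t → t ≤ height y → t ≠ t₀ →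
          joinColoring g st a b c (ladder u w' t) ≠ joinColoring g st a b c (ladder u w' t₀) := by
    by_cases hx1 : height x ≤ 1
    · -- the path passes through `c_0`, the only vertex colored `st`
      refine ⟨w, rfl, rfl, 1, hx1, by omega, fun t _ ht ht1 => ?_⟩
      rw [joinColoring_ladder (n := n) u w (t := t) (by omega),
        joinColoring_ladder (n := n) u w (t := 1) (by omega)]
      simp only [ht1, one_ne_zero, if_true, if_false, stripe]
      split_ifs <;> try cases w t
      all_goals simp_all
    · obtain ⟨w', hwx, hwy, t₀, h₁, h₂, h⟩ := exists_unique_stripe hab hac hbc w hxy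
      refine ⟨w', hwx, hwy, t₀, h₁, h₂, fun t h₃ h₄ ht => ?_⟩
      rw [joinColoring_ladder (n := n) u w' (t := t) (by omega),
        joinColoring_ladder (n := n) u w' (t := t₀) (by omega)]
      simp only [show t ≠ 0 by omega, show t ≠ 1 by omega, show t₀ ≠ 0 by omega,
        show t₀ ≠ 1 by omega, if_false]
      exact h t h₃ h₄ ht
  rw [ladder_congr u hwx.symm] at hx
  rw [ladder_congr u hwy.symm] at hy
  obtain ⟨p, hp, hsupp⟩ := exists_ladder_walk (G := G) u w' hxy.le hy2
  refine ⟨p.copy hx hy, ?_, joinColoring g st a b c (ladder (n := n) u w' t₀), ?_⟩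
  · rw [Walk.length_copy, hp, ← dist_ladder u w' hxy.le hy2, hx, hy]
  · rw [Walk.support_copy, hsupp, List.map_map]
    exact List.count_map_range'_eq_one ht₀x (by omega) fun t h₁ h₂ => huniq t h₁ (by omega)

theorem isSCFVC_joinColoring [Nonempty V] (hg : ∀ u v, G.Adj u v → g u ≠ g v)
    (hgs : ∀ u, g u ≠ st) (hab : a ≠ b) (hac : a ≠ c) (hbc : b ≠ c) (has : a ≠ st)
    (hbs : b ≠ st) (hcs : c ≠ st) : IsSCFVC (joinQ G n) (joinColoring g st a b c) := by
  intro x y hxy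
  wlog hle : height x ≤ height y generalizing x y
  · obtain ⟨p, hp, c', hc'⟩ := this y x hxy.symm (by omega)
    refine ⟨p.reverse, by rw [Walk.length_reverse, hp, dist_comm], c', ?_⟩
    rwa [Walk.support_reverse, List.map_reverse, List.count_reverse]
  obtain hlt | heq := hle.lt_or_eq
  · exact exists_geodesic_count_eq_one_of_height_lt hgs hab hac hbc has hbs hcs hlt
  by_cases hadj : (joinQ G n).Adj x y
  · exact hadj.exists_geodesic_count_eq_one
      (joinColoring_ne_of_adj hg hgs hab hac hbc has hbs hadj)
  obtain ⟨u, rfl⟩ : ∃ u, x = inl u := by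
    rcases x with u | q
    · exact ⟨u, rfl⟩
    · exact absurd (adj_of_height_eq hxy heq (by cases q <;> simp [height])) hadj
  obtain ⟨v, rfl⟩ : ∃ v, y = inl v := by
    rcases y with v | q
    · exact ⟨v, rfl⟩
    · cases q <;> simp [height] at heq
  let p : (joinQ G n).Walk (inl u) (inl v) :=
    .cons (adj_inl_C_zero u) (.cons (adj_inl_C_zero v).symm .nil)
  have hdist : (joinQ G n).dist (inl u) (inl v) = 2 := by
    have h₀ := p.reachable.pos_dist_of_ne hxy
    have h₁ : (joinQ G n).dist (inl u) (inl v) ≠ 1 := mt dist_eq_one_iff_adj.mp hadj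
    have h₂ : (joinQ G n).dist (inl u) (inl v) ≤ 2 := dist_le p
    omega
  exact ⟨p, hdist.symm, st, by simp [p, joinColoring, hgs]⟩

end Coloring

theorem exists_isSCFVC_of_colorable [Nonempty V] {k : ℕ} (hk : 4 ≤ k)
    (h : G.Colorable (k - 1)) : ∃ f : V ⊕ QV n → Fin k, IsSCFVC (joinQ G n) f := by
  obtain ⟨C⟩ := h
  have hC : ∀ u, (C u : ℕ) < k - 1 := fun u => (C u).isLt
  exact ⟨_, isSCFVC_joinColoring (g := fun u => Fin.castLE (by omega) (C u))
    (st := ⟨k - 1, by omega⟩) (a := ⟨0, by omega⟩) (b := ⟨1, by omega⟩) (c := ⟨2, by omega⟩)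
    (fun u v huv heq => C.valid huv (Fin.castLE_injective _ heq))
    (fun u => Fin.ne_of_val_ne (by simpa using (hC u).ne))
    (by simp) (by simp) (by simp) (Fin.ne_of_val_ne (by simp; omega))
    (Fin.ne_of_val_ne (by simp; omega)) (Fin.ne_of_val_ne (by simp; omega))⟩

theorem colorable_of_isSCFVC {α : Type*} [Fintype α] [DecidableEq α] {f : V ⊕ QV n → α}
    (hf : IsSCFVC (joinQ G n) f) : G.Colorable (Fintype.card α - 1) := by
  let C : G.Coloring {c // c ≠ f (inr (C 0))} :=
    Coloring.mk (fun u => ⟨f (inl u), hf.ne_of_adj (adj_inl_C_zero u)⟩)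
      fun huv heq => hf.ne_of_adj (adj_inl_inl huv) (congrArg Subtype.val heq)
  simpa using C.colorable

end JoinQ

theorem stmt8_general {V : Type*} [Nonempty V] (G : SimpleGraph V)
    (d k : ℕ) (hd : 3 ≤ d) (hodd : Odd d) (hk : 4 ≤ k) :
    (joinQ G ((d - 1) / 2)).diam = d ∧
    (G.Colorable (k - 1) ↔
      ∃ f : V ⊕ QV ((d - 1) / 2) → Fin k, IsSCFVC (joinQ G ((d - 1) / 2)) f) := by
  obtain ⟨n, rfl⟩ := hodd
  rw [show (2 * n + 1 - 1) / 2 = n by omega]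
  exact ⟨JoinQ.diam_joinQ (by omega), JoinQ.exists_isSCFVC_of_colorable hk,
    fun ⟨f, hf⟩ => by simpa using JoinQ.colorable_of_isSCFVC hf⟩

/-- For odd `d ≥ 3` and `k ≥ 4`, with `n = (d-1)/2`: the graph `G'` obtained from a
nonempty connected graph `G` and `Q n` by joining `c_0` to all of `G` has diameter
exactly `d`, and `G` is `(k-1)`-colorable iff `G'` is strongly conflict-free
vertex-connection `k`-colorable. -/
theorem stmt8 {V : Type*} [Fintype V] [Nonempty V] (G : SimpleGraph V) (hG : G.Connected)
    (d k : ℕ) (hd : 3 ≤ d) (hodd : Odd d) (hk : 4 ≤ k) :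
    (joinQ G ((d - 1) / 2)).diam = d ∧
    (G.Colorable (k - 1) ↔
      ∃ f : V ⊕ QV ((d - 1) / 2) → Fin k, IsSCFVC (joinQ G ((d - 1) / 2)) f) :=
  stmt8_general G d k hd hodd hk
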